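/- Let p^m ≡ 3 (mod 4), α a nonzero non-square in F_{p^m}, β ∈ F_{p^m} nonzero. Every ideal of the ring 𝓡 = R[x]/⟨x^{4p^s}-(α+βu)⟩, where R = F_{p^m}[u]/⟨u²⟩, is of the form ⟨(x²+γx+γ²/2)^i (x²-γx+γ²/2)^j⟩ for some 0 ≤ i, j ≤ 2p^s, where γ^4 = -4α₀ and α₀^{p^s} = α. In particular 𝓡 is a principal ideal ring. -/

import Mathlib

open Polynomial

/-- The chain ring `R = F_{p^m}[u]/⟨u²⟩`. -/
abbrev Ru (K : Type) [Field K] : Type := K[X] ⧸ Ideal.span {(X : K[X]) ^ 2}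

/-- The element `u` of `R`. -/
noncomputable def uR (K : Type) [Field K] : Ru K :=
  Ideal.Quotient.mk _ (X : K[X])

/-- The natural inclusion of `F_{p^m}` into `R`. -/
noncomputable def tR (K : Type) [Field K] (a : K) : Ru K :=
  Ideal.Quotient.mk _ (C a : K[X])

/-- The ambient ring `R[x]/⟨xⁿ - λ⟩` of `λ`-constacyclic codes of length `n` over `R`. -/
abbrev RC (K : Type) [Field K] (lam : Ru K) (n : ℕ) : Type :=
  (Ru K)[X] ⧸ Ideal.span {(X : (Ru K)[X]) ^ n - C lam}

noncomputable instance RC.instCommRing (K : Type) [Field K] (lam : Ru K) (n : ℕ) :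
    CommRing (RC K lam n) :=
  @Ideal.Quotient.commRing (Ru K)[X] _ _

/-- The canonical projection `R[x] → R[x]/⟨xⁿ - λ⟩`. -/
noncomputable def mkC (K : Type) [Field K] (lam : Ru K) (n : ℕ) :
    (Ru K)[X] →+* RC K lam n :=
  @Ideal.Quotient.mk (Ru K)[X] _ _ ⟨fun b ha => mul_comm b _ ▸ Ideal.mul_mem_left _ b ha⟩

/-- The quadratic `x² + γx + γ²/2`, viewed over `R`. -/
noncomputable def qR (K : Type) [Field K] (g : K) : (Ru K)[X] :=
  X ^ 2 + C (tR K g) * X + C (tR K (g ^ 2 / 2))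

/-!
Sending `u ↦ β⁻¹(xⁿ - α)` identifies `R[x]/⟨xⁿ - (α + βu)⟩` with `F[x]/⟨(xⁿ - α)²⟩`: the relation
`xⁿ = α + βu` becomes a tautology, and conversely `(xⁿ - α)² = (βu)² = 0`. With `n = 4pˢ` the
Frobenius gives `xⁿ - α = (x⁴ - α₀)^{pˢ} = (Q₊ Q₋)^{pˢ}` for `Q± = x² ± γx + γ²/2`, and each `Q±`
is irreducible because a root `r` would make `((2r ± γ)/γ)² = -1`, while `-1` is a non-square when
`pᵐ ≡ 3 (mod 4)`. Ideals of `F[x]/⟨f⟩` are generated by the divisors of `f`, which here are the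
`Q₊ⁱ Q₋ʲ` with `i, j ≤ 2pˢ`.
-/

theorem Ideal.exists_dvd_eq_map_span {R S : Type} [CommRing R] [IsPrincipalIdealRing R]
    [CommRing S] {π : R →+* S} (hπ : Function.Surjective π) {f : R} (hf : π f = 0)
    (J : Ideal S) : ∃ d, d ∣ f ∧ J = (Ideal.span {d}).map π := by
  obtain ⟨d, hd⟩ := Submodule.IsPrincipal.principal (J.comap π)
  rw [Ideal.submodule_span_eq] at hd
  refine ⟨d, ?_, ?_⟩
  · rw [← Ideal.mem_span_singleton, ← hd, Ideal.mem_comap, hf]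
    exact J.zero_mem
  · rw [← hd, Ideal.map_comap_of_surjective π hπ]

theorem exists_associated_pow_mul_pow_of_dvd {M : Type} [CommMonoidWithZero M]
    [IsCancelMulZero M] [DecompositionMonoid M] {P Q d : M} (hP : Prime P) (hQ : Prime Q)
    {a b : ℕ} (hd : d ∣ P ^ a * Q ^ b) : ∃ i ≤ a, ∃ j ≤ b, Associated d (P ^ i * Q ^ j) := by
  obtain ⟨d₁, d₂, hd₁, hd₂, rfl⟩ := exists_dvd_and_dvd_of_dvd_mul hd
  obtain ⟨i, hi, h₁⟩ := (dvd_prime_pow hP a).1 hd₁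
  obtain ⟨j, hj, h₂⟩ := (dvd_prime_pow hQ b).1 hd₂
  exact ⟨i, hi, j, hj, h₁.mul_mul h₂⟩

theorem AdjoinRoot.exists_ideal_eq_span_mk_pow_mul_pow {K : Type} [Field K] {P Q f : K[X]}
    (hP : Prime P) (hQ : Prime Q) {a b : ℕ} (hf : f ∣ P ^ a * Q ^ b)
    (J : Ideal (AdjoinRoot f)) :
    ∃ i ≤ a, ∃ j ≤ b, J = Ideal.span {AdjoinRoot.mk f (P ^ i * Q ^ j)} := by
  obtain ⟨d, hdf, rfl⟩ := Ideal.exists_dvd_eq_map_span mk_surjective (mk_self (f := f)) J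
  obtain ⟨i, hi, j, hj, hd⟩ := exists_associated_pow_mul_pow_of_dvd hP hQ (hdf.trans hf)
  refine ⟨i, hi, j, hj, ?_⟩
  rw [Ideal.span_singleton_eq_span_singleton.2 hd, Ideal.map_span, Set.image_singleton]

section Quadratic

variable {K : Type} [Field K]

theorem two_ne_zero_of_not_isSquare_neg_one (h : ¬IsSquare (-1 : K)) : (2 : K) ≠ 0 :=
  fun h2 => h ⟨1, by linear_combination -h2⟩

noncomputable def quadFactor (g : K) : K[X] := X ^ 2 + C g * X + C (g ^ 2 / 2)

theorem quadFactor_natDegree (g : K) : (quadFactor g).natDegree = 2 := by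
  unfold quadFactor; compute_degree!

theorem quadFactor_monic (g : K) : (quadFactor g).Monic := by
  unfold quadFactor; monicity!

theorem quadFactor_mul_quadFactor_neg (h2 : (2 : K) ≠ 0) {g a : K} (hg : g ^ 4 = -4 * a) :
    quadFactor g * quadFactor (-g) = X ^ 4 - C a := by
  have hC : C (g ^ 2 / 2) * C (g ^ 2 / 2) = -C a := by
    rw [← C_mul, ← C_neg]; congr 1; field_simp; linear_combination hg
  have hC' : C (g ^ 2 / 2) + C (g ^ 2 / 2) = C g * C g := by
    rw [← C_add, ← C_mul]; congr 1; field_simp; ring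
  unfold quadFactor
  rw [map_neg, neg_sq]
  linear_combination (X ^ 2 : K[X]) * hC' + hC

theorem quadFactor_irreducible (h : ¬IsSquare (-1 : K)) {g : K} (hg : g ≠ 0) :
    Irreducible (quadFactor g) := by
  have h2 := two_ne_zero_of_not_isSquare_neg_one h
  rw [irreducible_iff_roots_eq_zero_of_degree_le_three (by rw [quadFactor_natDegree])
    (by rw [quadFactor_natDegree]; norm_num), Multiset.eq_zero_iff_forall_notMem]
  intro r hr
  have hroot : r ^ 2 + g * r + g ^ 2 / 2 = 0 := by
    simpa [quadFactor, IsRoot] using (mem_roots (quadFactor_monic g).ne_zero).1 hr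
  refine h ⟨(2 * r + g) / g, ?_⟩
  field_simp at hroot ⊢
  linear_combination -2 * hroot

theorem qR_eq_map (g : K) : qR K g = (quadFactor g).map (algebraMap K (Ru K)) := by
  simp only [qR, quadFactor, Polynomial.map_add, Polynomial.map_pow, map_X, Polynomial.map_mul,
    map_C]
  rfl

end Quadratic

namespace AdjoinRoot

variable {k : Type} [CommRing k]

theorem sq_mk_mul_eq_zero (f a : k[X]) : mk (f ^ 2) (a * f) ^ 2 = 0 := by
  rw [← map_pow, mk_eq_zero, mul_pow]
  exact dvd_mul_left _ _

theorem root_X_pow_sub_C_pow {n : ℕ} (a : k) : root (X ^ n - C a) ^ n = of _ a := by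
  rw [← sub_eq_zero, ← mk_X, ← mk_C, ← map_pow, ← map_sub, mk_self]

theorem root_X_pow_pow (n : ℕ) : root (X ^ n : k[X]) ^ n = 0 := by
  rw [← mk_X, ← map_pow, mk_self]

variable (c : k) (β : kˣ) (n : ℕ)

noncomputable def dualNumbersToSq :
    AdjoinRoot (X ^ 2 : k[X]) →+* AdjoinRoot ((X ^ n - C c) ^ 2) :=
  lift (algebraMap k _) (mk _ (C (↑β⁻¹ : k) * (X ^ n - C c)))
    (by rw [eval₂_X_pow]; exact sq_mk_mul_eq_zero _ _)

theorem dualNumbersToSq_of (a : k) : dualNumbersToSq c β n (of _ a) = of _ a := lift_of _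

theorem dualNumbersToSq_root :
    dualNumbersToSq c β n (root _) = mk _ (C (↑β⁻¹ : k) * (X ^ n - C c)) := lift_root _

noncomputable def constacyclicModulus : (AdjoinRoot (X ^ 2 : k[X]))[X] :=
  X ^ n - C (of _ c + of _ (β : k) * root _)

noncomputable def constacyclicToSq :
    AdjoinRoot (constacyclicModulus c β n) →+* AdjoinRoot ((X ^ n - C c) ^ 2) :=
  lift (dualNumbersToSq c β n) (root _) (by
    have hβ : C (↑β : k) * C (↑β⁻¹ : k) = 1 := by rw [← C_mul, Units.mul_inv, C_1]
    have hrel : X ^ n - (C c + C (↑β : k) * (C (↑β⁻¹ : k) * (X ^ n - C c))) = 0 := by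
      linear_combination -(X ^ n - C c) * hβ
    rw [constacyclicModulus, eval₂_sub, eval₂_X_pow, eval₂_C, map_add, map_mul,
      dualNumbersToSq_of, dualNumbersToSq_of, dualNumbersToSq_root, ← mk_C, ← mk_C, ← mk_X,
      ← map_pow, ← map_mul, ← map_add, ← map_sub, hrel, map_zero])

noncomputable def sqToConstacyclic :
    AdjoinRoot ((X ^ n - C c) ^ 2) →+* AdjoinRoot (constacyclicModulus c β n) :=
  lift ((of _).comp (of _)) (root _) (by
    rw [eval₂_pow, eval₂_sub, eval₂_X_pow, eval₂_C, constacyclicModulus, root_X_pow_sub_C_pow,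
      RingHom.comp_apply, ← map_sub, add_sub_cancel_left, ← map_pow, mul_pow, root_X_pow_pow,
      mul_zero, map_zero])

noncomputable def constacyclicEquiv :
    AdjoinRoot (constacyclicModulus c β n) ≃+* AdjoinRoot ((X ^ n - C c) ^ 2) :=
  RingEquiv.ofRingHom (constacyclicToSq c β n) (sqToConstacyclic c β n)
    (by
      refine ringHom_ext (RingHom.ext fun a => ?_) ?_
      · simp [constacyclicToSq, sqToConstacyclic, dualNumbersToSq_of]
      · simp [constacyclicToSq, sqToConstacyclic])
    (by
      refine ringHom_ext (ringHom_ext (RingHom.ext fun a => ?_) ?_) ?_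
      · simp [constacyclicToSq, sqToConstacyclic, dualNumbersToSq_of]
      · simp only [sqToConstacyclic, constacyclicToSq, RingHom.coe_comp, Function.comp_apply,
          lift_of, dualNumbersToSq_root, map_mul, mk_C, map_sub, map_pow, mk_X, lift_root,
          RingHomCompTriple.comp_eq]
        rw [constacyclicModulus, root_X_pow_sub_C_pow, ← map_sub, ← map_mul, add_sub_cancel_left,
          ← mul_assoc, ← map_mul, Units.inv_mul, map_one, one_mul]
      · simp [constacyclicToSq, sqToConstacyclic])

theorem constacyclicEquiv_symm_mk (g : k[X]) :
    (constacyclicEquiv c β n).symm (mk _ g) = mk _ (g.map (of _)) := by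
  rw [constacyclicEquiv, RingEquiv.ofRingHom_symm_apply, sqToConstacyclic, lift_mk, ← aeval_eq,
    aeval_def, eval₂_map, algebraMap_eq]

end AdjoinRoot

theorem stmt12_general (p s m : ℕ) (hp : p.Prime)
    (K : Type) [Field K] [Fintype K] (hK : Fintype.card K = p ^ m)
    (h3 : p ^ m % 4 = 3) (α β : K) (hα : α ≠ 0) (hβ : β ≠ 0)
    (α₀ : K) (hα₀ : α₀ ^ p ^ s = α) (γ : K) (hγ : γ ^ 4 = -4 * α₀) :
    ∀ I : Ideal (RC K (tR K α + tR K β * uR K) (4 * p ^ s)),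
      ∃ i j : ℕ, i ≤ 2 * p ^ s ∧ j ≤ 2 * p ^ s ∧
        I = Ideal.span {mkC K (tR K α + tR K β * uR K) (4 * p ^ s)
          (qR K γ ^ i * qR K (-γ) ^ j)} := by
  have : Fact p.Prime := ⟨hp⟩
  have : CharP K p := charP_of_card_eq_prime_pow hK
  have hsq : ¬IsSquare (-1 : K) := by rw [FiniteField.isSquare_neg_one_iff, hK]; omega
  have h2 := two_ne_zero_of_not_isSquare_neg_one hsq
  have hα₀0 : α₀ ≠ 0 := by
    rintro rfl
    exact hα (by rw [← hα₀, zero_pow (pow_ne_zero s hp.ne_zero)])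
  have hγ0 : γ ≠ 0 := by
    rintro rfl
    exact hα₀0 (by simpa [h2, show (4 : K) = 2 * 2 by norm_num] using hγ)
  have hf : (X ^ (4 * p ^ s) - C α) ^ 2 =
      quadFactor γ ^ (2 * p ^ s) * quadFactor (-γ) ^ (2 * p ^ s) :=
    calc (X ^ (4 * p ^ s) - C α) ^ 2 = ((X ^ 4 - C α₀) ^ p ^ s) ^ 2 := by
          rw [sub_pow_char_pow, ← pow_mul, ← C_pow, hα₀]
      _ = _ := by rw [← quadFactor_mul_quadFactor_neg h2 hγ]; ring
  intro I
  -- `RC K λ n` and `Ru K` are `AdjoinRoot`s by definition.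
  let e : RC K (tR K α + tR K β * uR K) (4 * p ^ s) ≃+* AdjoinRoot ((X ^ (4 * p ^ s) - C α) ^ 2) :=
    AdjoinRoot.constacyclicEquiv α (Units.mk0 β hβ) (4 * p ^ s)
  have he (g : K[X]) : e.symm (AdjoinRoot.mk _ g) = mkC K _ _ (g.map (algebraMap K (Ru K))) :=
    AdjoinRoot.constacyclicEquiv_symm_mk _ _ _ g
  obtain ⟨i, hi, j, hj, hI⟩ := AdjoinRoot.exists_ideal_eq_span_mk_pow_mul_pow
    (quadFactor_irreducible hsq hγ0).prime (quadFactor_irreducible hsq (neg_ne_zero.2 hγ0)).prime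
    hf.dvd (I.map (e : _ →+* _))
  refine ⟨i, j, hi, hj, ?_⟩
  rw [← Ideal.map_of_equiv (I := I) e, hI, Ideal.map_span, Set.image_singleton,
    RingEquiv.coe_toRingHom, he, Polynomial.map_mul, Polynomial.map_pow, Polynomial.map_pow,
    ← qR_eq_map, ← qR_eq_map]

theorem stmt12 (p s m : ℕ) (hp : p.Prime) (hodd : Odd p) (hs : 0 < s) (hm : 0 < m)
    (K : Type) [Field K] [Fintype K] (hK : Fintype.card K = p ^ m)
    (h3 : p ^ m % 4 = 3) (α β : K) (hα : α ≠ 0) (hns : ¬ IsSquare α) (hβ : β ≠ 0)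
    (α₀ : K) (hα₀ : α₀ ^ p ^ s = α) (γ : K) (hγ : γ ^ 4 = -4 * α₀) :
    ∀ I : Ideal (RC K (tR K α + tR K β * uR K) (4 * p ^ s)),
      ∃ i j : ℕ, i ≤ 2 * p ^ s ∧ j ≤ 2 * p ^ s ∧
        I = Ideal.span {mkC K (tR K α + tR K β * uR K) (4 * p ^ s)
          (qR K γ ^ i * qR K (-γ) ^ j)} :=
  stmt12_general p s m hp K hK h3 α β hα hβ α₀ hα₀ γ hγ
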